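/- Let (G,M,I) be a finite context, z ∈ G, H = G ∖ {z} nonempty, let π□ be the finest extent partition of (G,M,I), and let z^□□ be the class of π□ containing z. Then a set A ⊆ G is a class of π□ if and only if either (1) A = z^□□, or (2) A is a class of the finest extent partition of the subcontext (H, M, I ∩ (H×M)) that is disjoint from z^□□. -/
import Mathlib


open Set

variable {G M : Type*}

/-- The attribute-derivation `A'` of a set of objects (the restricted relation of a
subcontext agrees with `I` on its object set, so no restriction is needed here). -/
def polarUp (I : G → M → Prop) (A : Set G) : Set M := {m | ∀ g ∈ A, I g m}

/-- The object-derivation `B'` of a set of attributes, computed in the subcontext whose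
object set is `H` (relation `I ∩ H×M`). -/
def polarDown (I : G → M → Prop) (H : Set G) (B : Set M) : Set G :=
  {g | g ∈ H ∧ ∀ m ∈ B, I g m}

/-- The closure `A''` computed in the subcontext with object set `H`.
Taking `H = Set.univ` gives the closure in the full context `(G,M,I)`. -/
def cl2 (I : G → M → Prop) (H A : Set G) : Set G := polarDown I H (polarUp I A)

/-- `A` is an extent of the subcontext with object set `H`. -/
def IsExtent (I : G → M → Prop) (H A : Set G) : Prop := A ⊆ H ∧ cl2 I H A = A

/-- An extent partition of the subcontext with object set `H`: a partition of `H`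
all of whose classes are extents. -/
def IsExtentPartition (I : G → M → Prop) (H : Set G) (π : Set (Set G)) : Prop :=
  (∀ A ∈ π, A.Nonempty) ∧ π.Pairwise Disjoint ∧ ⋃₀ π = H ∧ ∀ A ∈ π, IsExtent I H A

/-- `E` is a box extent of the subcontext with object set `H`: a class of some extent
partition, or `∅''`. -/
def IsBoxExtent (I : G → M → Prop) (H E : Set G) : Prop :=
  (∃ π : Set (Set G), IsExtentPartition I H π ∧ E ∈ π) ∨ E = cl2 I H ∅

/-- The finest extent partition: every class of every extent partition is a union of
its classes. -/
def IsFinestExtentPartition (I : G → M → Prop) (H : Set G) (π : Set (Set G)) : Prop :=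
  IsExtentPartition I H π ∧
    ∀ σ : Set (Set G), IsExtentPartition I H σ → ∀ A ∈ σ, ∃ S ⊆ π, A = ⋃₀ S

/-- A classification tree in the box extent lattice of the subcontext with object set
`H`: a set of nonempty box extents such that for every nonempty box extent `X`,
`{E ∈ T | X ⊆ E}` is a nonempty chain under inclusion. -/
def IsBoxClassTree (I : G → M → Prop) (H : Set G) (T : Set (Set G)) : Prop :=
  (∀ E ∈ T, E.Nonempty ∧ IsBoxExtent I H E) ∧
  ∀ X : Set G, X.Nonempty → IsBoxExtent I H X →
    ({E ∈ T | X ⊆ E}.Nonempty ∧ IsChain (· ⊆ ·) {E ∈ T | X ⊆ E})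

/-- A maximal classification tree in the box extent lattice. -/
def IsMaxBoxClassTree (I : G → M → Prop) (H : Set G) (T : Set (Set G)) : Prop :=
  IsBoxClassTree I H T ∧ ∀ T' : Set (Set G), IsBoxClassTree I H T' → T ⊆ T' → T' = T

lemma polarUp_anti (I : G → M → Prop) {A B : Set G} (h : A ⊆ B) :
    polarUp I B ⊆ polarUp I A := fun m hm g hg => hm g (h hg)

lemma cl2_mono (I : G → M → Prop) (H : Set G) {A B : Set G} (h : A ⊆ B) :
    cl2 I H A ⊆ cl2 I H B :=
  fun g hg => ⟨hg.1, fun m hm => hg.2 m (polarUp_anti I h hm)⟩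

lemma subset_cl2 (I : G → M → Prop) {H A : Set G} (h : A ⊆ H) :
    A ⊆ cl2 I H A := fun g hg => ⟨h hg, fun m hm => hm g hg⟩

lemma cl2_restrict (I : G → M → Prop) (H A : Set G) :
    cl2 I H A = cl2 I Set.univ A ∩ H := by
  ext g
  exact ⟨fun h => ⟨⟨trivial, h.2⟩, h.1⟩, fun h => ⟨h.2, h.1.2⟩⟩

lemma class_eq {π : Set (Set G)} (hd : π.Pairwise Disjoint) {P Q : Set G}
    (hP : P ∈ π) (hQ : Q ∈ π) {x : G} (hxP : x ∈ P) (hxQ : x ∈ Q) : P = Q := by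
  by_contra h
  exact Set.disjoint_left.mp (hd hP hQ h) hxP hxQ

lemma finest_subset {I : G → M → Prop} {H : Set G} {π τ : Set (Set G)}
    (hπ : IsFinestExtentPartition I H π) (hτ : IsExtentPartition I H τ)
    {C P : Set G} (hC : C ∈ τ) (hP : P ∈ π) {x : G} (hxP : x ∈ P) (hxC : x ∈ C) :
    P ⊆ C := by
  obtain ⟨S, hSπ, hCS⟩ := hπ.2 τ hτ C hC
  rw [hCS] at hxC ⊢
  obtain ⟨Q, hQS, hxQ⟩ := hxC
  have hPQ : P = Q := class_eq hπ.1.2.1 hP (hSπ hQS) hxP hxQ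
  exact hPQ ▸ Set.subset_sUnion_of_mem hQS

/-- Let `H = G ∖ {z}` be nonempty, `π` the finest extent partition of `(G,M,I)` and `Z`
its class containing `z`, and `σ` the finest extent partition of the subcontext
`(H, M, I ∩ H×M)`. Then `A` is a class of `π` iff either `A = Z`, or `A` is a class of
`σ` disjoint from `Z`. -/
theorem finest_classes_one_object_reduction
    [Fintype G] [Fintype M] (I : G → M → Prop)
    (z : G) (hH : (Set.univ \ {z} : Set G).Nonempty)
    (π : Set (Set G)) (hπ : IsFinestExtentPartition I Set.univ π)
    (Z : Set G) (hZ : Z ∈ π) (hzZ : z ∈ Z)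
    (σ : Set (Set G)) (hσ : IsFinestExtentPartition I (Set.univ \ {z}) σ) :
    ∀ A : Set G, A ∈ π ↔ (A = Z ∨ (A ∈ σ ∧ A ∩ Z = ∅)) := by
  have hπpart := hπ.1
  have hσpart := hσ.1
  set H : Set G := Set.univ \ {z} with hHdef
  -- τ₁ : the restriction of π to H is an extent partition of H
  set τ₁ : Set (Set G) := {C | C.Nonempty ∧ ∃ P ∈ π, C = P \ {z}} with hτ₁def
  have hτ₁ : IsExtentPartition I H τ₁ := by
    refine ⟨fun C hC => hC.1, ?_, ?_, ?_⟩
    · rintro X ⟨_, P, hP, rfl⟩ Y ⟨_, Q, hQ, rfl⟩ hXY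
      have hPQ : P ≠ Q := by rintro rfl; exact hXY rfl
      exact Set.disjoint_of_subset Set.diff_subset Set.diff_subset
        (hπpart.2.1 hP hQ hPQ)
    · ext x
      constructor
      · rintro ⟨C, ⟨_, P, hP, rfl⟩, hx⟩
        exact ⟨trivial, hx.2⟩
      · intro hx
        have hxu : x ∈ ⋃₀ π := by rw [hπpart.2.2.1]; trivial
        obtain ⟨P, hP, hxP⟩ := hxu
        exact ⟨P \ {z}, ⟨⟨x, hxP, hx.2⟩, P, hP, rfl⟩, hxP, hx.2⟩
    · rintro C ⟨_, P, hP, rfl⟩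
      have hPext := (hπpart.2.2.2 P hP).2
      constructor
      · intro g hg; exact ⟨trivial, hg.2⟩
      · apply Set.Subset.antisymm
        · intro g hg
          have h1 : g ∈ cl2 I Set.univ (P \ {z}) ∩ H := (cl2_restrict I H (P \ {z})) ▸ hg
          have h2 : g ∈ cl2 I Set.univ P := cl2_mono I Set.univ Set.diff_subset h1.1
          rw [hPext] at h2
          exact ⟨h2, h1.2.2⟩
        · exact subset_cl2 I (fun g hg => ⟨trivial, hg.2⟩)
  -- key: a class of π other than Z is a class of σ disjoint from Z
  have key : ∀ A ∈ π, A ≠ Z → A ∈ σ ∧ A ∩ Z = ∅ := by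
    intro A hA hAZ
    have hdisj : Disjoint A Z := hπpart.2.1 hA hZ hAZ
    have hzA : z ∉ A := fun h => Set.disjoint_left.mp hdisj h hzZ
    have hAH : A ⊆ H := fun g hg =>
      ⟨trivial, fun he => hzA (Set.mem_singleton_iff.mp he ▸ hg)⟩
    have hAne : A.Nonempty := hπpart.1 A hA
    have hAτ₁ : A ∈ τ₁ := ⟨hAne, A, hA, (Set.diff_singleton_eq_self hzA).symm⟩
    have claim1 : ∀ B ∈ σ, ∀ x, x ∈ B → x ∈ A → B ⊆ A := fun B hB x hxB hxA =>
      finest_subset hσ hτ₁ hAτ₁ hB hxB hxA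
    set S₀ : Set (Set G) := {B ∈ σ | (B ∩ A).Nonempty} with hS₀def
    have hS₀sub : ∀ B ∈ S₀, B ⊆ A := by
      rintro B ⟨hBσ, x, hxB, hxA⟩
      exact claim1 B hBσ x hxB hxA
    have hS₀union : ⋃₀ S₀ = A := by
      apply Set.Subset.antisymm
      · rintro x ⟨B, hB, hxB⟩; exact hS₀sub B hB hxB
      · intro x hxA
        have hxH : x ∈ ⋃₀ σ := by rw [hσpart.2.2.1]; exact hAH hxA
        obtain ⟨B, hBσ, hxB⟩ := hxH
        exact ⟨B, ⟨hBσ, x, hxB, hxA⟩, hxB⟩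
    have hS₀ext : ∀ B ∈ S₀, IsExtent I Set.univ B := by
      intro B hB
      refine ⟨Set.subset_univ B, ?_⟩
      have hBA : B ⊆ A := hS₀sub B hB
      have hBH : cl2 I H B = B := (hσpart.2.2.2 B hB.1).2
      have h1 : cl2 I Set.univ B ⊆ A := by
        have h := cl2_mono I Set.univ hBA
        rwa [(hπpart.2.2.2 A hA).2] at h
      apply Set.Subset.antisymm
      · intro g hg
        have hg2 : g ∈ cl2 I H B := by
          rw [cl2_restrict]; exact ⟨hg, hAH (h1 hg)⟩
        rwa [hBH] at hg2
      · exact subset_cl2 I (Set.subset_univ B)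
    set τ : Set (Set G) := (π \ {A}) ∪ S₀ with hτdef
    have hτ : IsExtentPartition I Set.univ τ := by
      refine ⟨?_, ?_, ?_, ?_⟩
      · rintro X (hX | hX)
        · exact hπpart.1 X hX.1
        · exact hσpart.1 X hX.1
      · rintro X (hX | hX) Y (hY | hY) hXY
        · exact hπpart.2.1 hX.1 hY.1 hXY
        · exact Set.disjoint_of_subset_right (hS₀sub Y hY)
            (hπpart.2.1 hX.1 hA (fun h => hX.2 (Set.mem_singleton_iff.mpr h)))
        · exact (Set.disjoint_of_subset_right (hS₀sub X hX)
            (hπpart.2.1 hY.1 hA (fun h => hY.2 (Set.mem_singleton_iff.mpr h)))).symm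
        · exact hσpart.2.1 hX.1 hY.1 hXY
      · rw [Set.eq_univ_iff_forall]
        intro x
        have hxu : x ∈ ⋃₀ π := by rw [hπpart.2.2.1]; trivial
        obtain ⟨P, hP, hxP⟩ := hxu
        by_cases hPA : P = A
        · subst hPA
          have hx2 : x ∈ ⋃₀ S₀ := hS₀union ▸ hxP
          obtain ⟨B, hB, hxB⟩ := hx2
          exact ⟨B, Or.inr hB, hxB⟩
        · exact ⟨P, Or.inl ⟨hP, fun h => hPA (Set.mem_singleton_iff.mp h)⟩, hxP⟩
      · rintro X (hX | hX)
        · exact hπpart.2.2.2 X hX.1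
        · exact hS₀ext X hX
    have hBA_eq : ∀ B ∈ S₀, B = A := by
      intro B hB
      obtain ⟨S, hSπ, hBS⟩ := hπ.2 τ hτ B (Or.inr hB)
      obtain ⟨x, hxB⟩ := hσpart.1 B hB.1
      have hxS : x ∈ ⋃₀ S := hBS ▸ hxB
      obtain ⟨P, hPS, hxP⟩ := hxS
      have hPB : P ⊆ B := hBS ▸ Set.subset_sUnion_of_mem hPS
      have hPA : P = A := class_eq hπpart.2.1 (hSπ hPS) hA hxP (hS₀sub B hB hxB)
      exact Set.Subset.antisymm (hS₀sub B hB) (hPA ▸ hPB)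
    obtain ⟨x, hxA⟩ := hAne
    have hxH : x ∈ ⋃₀ σ := by rw [hσpart.2.2.1]; exact hAH hxA
    obtain ⟨B, hBσ, hxB⟩ := hxH
    have hBS₀ : B ∈ S₀ := ⟨hBσ, x, hxB, hxA⟩
    exact ⟨(hBA_eq B hBS₀) ▸ hBσ, Set.disjoint_iff_inter_eq_empty.mp hdisj⟩
  intro A
  constructor
  · intro hA
    by_cases h : A = Z
    · exact Or.inl h
    · exact Or.inr (key A hA h)
  · rintro (rfl | ⟨hAσ, hAZ⟩)
    · exact hZ
    · obtain ⟨a, haA⟩ := hσpart.1 A hAσ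
      have haH : a ∈ H := by rw [← hσpart.2.2.1]; exact ⟨A, hAσ, haA⟩
      have haτ₁ : a ∈ ⋃₀ τ₁ := by rw [hτ₁.2.2.1]; exact haH
      obtain ⟨C, hCτ₁, haC⟩ := haτ₁
      obtain ⟨hCne, P, hPπ, rfl⟩ := hCτ₁
      have hAP : A ⊆ P \ {z} :=
        finest_subset hσ hτ₁ ⟨hCne, P, hPπ, rfl⟩ hAσ haA haC
      have hPZ : P ≠ Z := by
        intro hPZeq
        have ha : a ∈ A ∩ Z := ⟨haA, hPZeq ▸ (hAP haA).1⟩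
        rw [hAZ] at ha; exact ha
      obtain ⟨hPσ, _⟩ := key P hPπ hPZ
      have hAPeq : A = P := class_eq hσpart.2.1 hAσ hPσ haA (hAP haA).1
      exact hAPeq ▸ hPπ
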